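/- arXiv:2411.04033 — 2 statements merged into one kernel-verified Lean document; each statement's English description precedes it below -/
import Mathlib

section
/- Let Ψ₊ : ℝ × ℝ → ℂ be a smooth solution of i·a·∂ₜΨ₊ + b·∂ₓₓΨ₊ = 0. Then u := Ψ₊ + Ψ₊* = 2·Re(Ψ₊) is a real-valued solution of the beam equation a²·∂ₜₜu + b²·∂ₓₓₓₓu = 0. -/
open Complex

noncomputable def pdt (f : ℝ × ℝ → ℂ) : ℝ × ℝ → ℂ :=
  fun p => deriv (fun s => f (s, p.2)) p.1

noncomputable def pdx (f : ℝ × ℝ → ℂ) : ℝ × ℝ → ℂ :=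
  fun p => deriv (fun y => f (p.1, y)) p.2

noncomputable def pdtR (f : ℝ × ℝ → ℝ) : ℝ × ℝ → ℝ :=
  fun p => deriv (fun s => f (s, p.2)) p.1

noncomputable def pdxR (f : ℝ × ℝ → ℝ) : ℝ × ℝ → ℝ :=
  fun p => deriv (fun y => f (p.1, y)) p.2

noncomputable def Splus (a b : ℝ) (f : ℝ × ℝ → ℂ) : ℝ × ℝ → ℂ :=
  fun p => Complex.I * (a : ℂ) * pdt f p + (b : ℂ) * pdx (pdx f) p

noncomputable def Sminus (a b : ℝ) (f : ℝ × ℝ → ℂ) : ℝ × ℝ → ℂ :=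
  fun p => -Complex.I * (a : ℂ) * pdt f p + (b : ℂ) * pdx (pdx f) p

lemma hasDerivAt_slice_t (f : ℝ × ℝ → ℂ) (hf : Differentiable ℝ f) (p : ℝ × ℝ) :
    HasDerivAt (fun s => f (s, p.2)) (fderiv ℝ f p ((1:ℝ), (0:ℝ))) p.1 := by
  have h1 : HasDerivAt (fun s : ℝ => (s, p.2)) ((1:ℝ), (0:ℝ)) p.1 :=
    (hasDerivAt_id p.1).prodMk (hasDerivAt_const _ _)
  have h2 := ((hf (p.1, p.2)).hasFDerivAt).comp_hasDerivAt p.1 h1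
  exact h2

lemma hasDerivAt_slice_x (f : ℝ × ℝ → ℂ) (hf : Differentiable ℝ f) (p : ℝ × ℝ) :
    HasDerivAt (fun y => f (p.1, y)) (fderiv ℝ f p ((0:ℝ), (1:ℝ))) p.2 := by
  have h1 : HasDerivAt (fun y : ℝ => (p.1, y)) ((0:ℝ), (1:ℝ)) p.2 :=
    (hasDerivAt_const _ _).prodMk (hasDerivAt_id p.2)
  have h2 := ((hf (p.1, p.2)).hasFDerivAt).comp_hasDerivAt p.2 h1
  exact h2

lemma pdt_eq (f : ℝ × ℝ → ℂ) (hf : Differentiable ℝ f) (p : ℝ × ℝ) :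
    pdt f p = fderiv ℝ f p ((1:ℝ), (0:ℝ)) :=
  (hasDerivAt_slice_t f hf p).deriv

lemma pdx_eq (f : ℝ × ℝ → ℂ) (hf : Differentiable ℝ f) (p : ℝ × ℝ) :
    pdx f p = fderiv ℝ f p ((0:ℝ), (1:ℝ)) :=
  (hasDerivAt_slice_x f hf p).deriv

lemma contDiff_pdt (f : ℝ × ℝ → ℂ) (hf : ContDiff ℝ (⊤ : ℕ∞) f) : ContDiff ℝ (⊤ : ℕ∞) (pdt f) := by
  have h : pdt f = fun p => fderiv ℝ f p ((1:ℝ), (0:ℝ)) :=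
    funext fun p => pdt_eq f (hf.differentiable (by simp)) p
  rw [h]
  exact (hf.fderiv_right (by simp)).clm_apply contDiff_const

lemma contDiff_pdx (f : ℝ × ℝ → ℂ) (hf : ContDiff ℝ (⊤ : ℕ∞) f) : ContDiff ℝ (⊤ : ℕ∞) (pdx f) := by
  have h : pdx f = fun p => fderiv ℝ f p ((0:ℝ), (1:ℝ)) :=
    funext fun p => pdx_eq f (hf.differentiable (by simp)) p
  rw [h]
  exact (hf.fderiv_right (by simp)).clm_apply contDiff_const

lemma fderiv_apply_const (f : ℝ × ℝ → ℂ) (hf : ContDiff ℝ (⊤ : ℕ∞) f) (v w : ℝ × ℝ) (p : ℝ × ℝ) :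
    fderiv ℝ (fun q => fderiv ℝ f q v) p w = fderiv ℝ (fderiv ℝ f) p w v := by
  have hfd : Differentiable ℝ (fderiv ℝ f) := (hf.fderiv_right (m := (⊤ : ℕ∞)) (by simp)).differentiable (by simp)
  have hL := ((ContinuousLinearMap.apply ℝ ℂ v).hasFDerivAt).comp p (hfd p).hasFDerivAt
  have h2 : HasFDerivAt (fun q => fderiv ℝ f q v)
      ((ContinuousLinearMap.apply ℝ ℂ v).comp (fderiv ℝ (fderiv ℝ f) p)) p := hL
  rw [h2.fderiv]
  rfl

lemma pdt_pdx_comm (f : ℝ × ℝ → ℂ) (hf : ContDiff ℝ (⊤ : ℕ∞) f) (p : ℝ × ℝ) :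
    pdt (pdx f) p = pdx (pdt f) p := by
  have hd : Differentiable ℝ f := hf.differentiable (by simp)
  have hsymm : IsSymmSndFDerivAt ℝ f p := hf.contDiffAt.isSymmSndFDerivAt (by norm_num; exact WithTop.coe_le_coe.mpr le_top)
  have h1 : pdt (pdx f) p = fderiv ℝ (fderiv ℝ f) p ((1:ℝ),(0:ℝ)) ((0:ℝ),(1:ℝ)) := by
    rw [pdt_eq _ ((contDiff_pdx f hf).differentiable (by simp)) p]
    have h : pdx f = fun q => fderiv ℝ f q ((0:ℝ),(1:ℝ)) := funext fun q => pdx_eq f hd q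
    rw [h, fderiv_apply_const f hf]
  have h2 : pdx (pdt f) p = fderiv ℝ (fderiv ℝ f) p ((0:ℝ),(1:ℝ)) ((1:ℝ),(0:ℝ)) := by
    rw [pdx_eq _ ((contDiff_pdt f hf).differentiable (by simp)) p]
    have h : pdt f = fun q => fderiv ℝ f q ((1:ℝ),(0:ℝ)) := funext fun q => pdt_eq f hd q
    rw [h, fderiv_apply_const f hf]
  rw [h1, h2, hsymm]

lemma pdt_add (f g : ℝ × ℝ → ℂ) (hf : Differentiable ℝ f) (hg : Differentiable ℝ g)
    (p : ℝ × ℝ) : pdt (fun q => f q + g q) p = pdt f p + pdt g p := by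
  rw [pdt_eq f hf p, pdt_eq g hg p]
  exact ((hasDerivAt_slice_t f hf p).add (hasDerivAt_slice_t g hg p)).deriv

lemma pdx_add (f g : ℝ × ℝ → ℂ) (hf : Differentiable ℝ f) (hg : Differentiable ℝ g)
    (p : ℝ × ℝ) : pdx (fun q => f q + g q) p = pdx f p + pdx g p := by
  rw [pdx_eq f hf p, pdx_eq g hg p]
  exact ((hasDerivAt_slice_x f hf p).add (hasDerivAt_slice_x g hg p)).deriv

lemma pdt_const_mul (c : ℂ) (f : ℝ × ℝ → ℂ) (hf : Differentiable ℝ f) (p : ℝ × ℝ) :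
    pdt (fun q => c * f q) p = c * pdt f p := by
  rw [pdt_eq f hf p]
  exact ((hasDerivAt_slice_t f hf p).const_mul c).deriv

lemma pdx_const_mul (c : ℂ) (f : ℝ × ℝ → ℂ) (hf : Differentiable ℝ f) (p : ℝ × ℝ) :
    pdx (fun q => c * f q) p = c * pdx f p := by
  rw [pdx_eq f hf p]
  exact ((hasDerivAt_slice_x f hf p).const_mul c).deriv

lemma contDiff_conj (f : ℝ × ℝ → ℂ) (hf : ContDiff ℝ (⊤ : ℕ∞) f) :
    ContDiff ℝ (⊤ : ℕ∞) (fun q => starRingEnd ℂ (f q)) :=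
  Complex.conjCLE.contDiff.comp hf

lemma pdt_conj (f : ℝ × ℝ → ℂ) (hf : Differentiable ℝ f) (p : ℝ × ℝ) :
    pdt (fun q => starRingEnd ℂ (f q)) p = starRingEnd ℂ (pdt f p) := by
  rw [pdt_eq f hf p]
  have h := (Complex.conjCLE.toContinuousLinearMap.hasFDerivAt).comp_hasDerivAt p.1
    (hasDerivAt_slice_t f hf p)
  exact h.deriv

lemma pdx_conj (f : ℝ × ℝ → ℂ) (hf : Differentiable ℝ f) (p : ℝ × ℝ) :
    pdx (fun q => starRingEnd ℂ (f q)) p = starRingEnd ℂ (pdx f p) := by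
  rw [pdx_eq f hf p]
  have h := (Complex.conjCLE.toContinuousLinearMap.hasFDerivAt).comp_hasDerivAt p.2
    (hasDerivAt_slice_x f hf p)
  exact h.deriv

lemma key_lemma (c : ℂ) (f : ℝ × ℝ → ℂ) (hf : ContDiff ℝ (⊤ : ℕ∞) f)
    (h : ∀ p, pdt f p = c * pdx (pdx f) p) (p : ℝ × ℝ) :
    pdt (pdt f) p = c ^ 2 * pdx (pdx (pdx (pdx f))) p := by
  have hxf := contDiff_pdx f hf
  have hxxf := contDiff_pdx _ hxf
  have hxxxf := contDiff_pdx _ hxxf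
  have hpt : pdt f = fun q => c * pdx (pdx f) q := funext h
  have step1 : pdt (pdt f) p = c * pdt (pdx (pdx f)) p := by
    rw [hpt]; exact pdt_const_mul c _ (hxxf.differentiable (by simp)) p
  have step2 : pdt (pdx (pdx f)) p = pdx (pdx (pdt f)) p := by
    rw [pdt_pdx_comm (pdx f) hxf p]
    have h3 : pdt (pdx f) = pdx (pdt f) := funext fun q => pdt_pdx_comm f hf q
    rw [h3]
  have step3 : pdx (pdx (pdt f)) p = c * pdx (pdx (pdx (pdx f))) p := by
    rw [hpt]
    have h4 : pdx (fun q => c * pdx (pdx f) q) = fun q => c * pdx (pdx (pdx f)) q :=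
      funext fun q => pdx_const_mul c _ (hxxf.differentiable (by simp)) q
    rw [h4]
    exact pdx_const_mul c _ (hxxxf.differentiable (by simp)) p
  rw [step1, step2, step3]; ring

theorem real_part_solution_beam (a b : ℝ) (ha : 0 < a) (hb : 0 < b)
    (Ψp : ℝ × ℝ → ℂ) (hΨp : ContDiff ℝ (⊤ : ℕ∞) Ψp)
    (hSp : ∀ p : ℝ × ℝ, Complex.I * (a : ℂ) * pdt Ψp p + (b : ℂ) * pdx (pdx Ψp) p = 0) :
    (∀ p : ℝ × ℝ, Ψp p + starRingEnd ℂ (Ψp p) = (2 * (Ψp p).re : ℝ)) ∧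
    (∀ p : ℝ × ℝ, ((fun q => Ψp q + starRingEnd ℂ (Ψp q)) p).im = 0) ∧
    (∀ p : ℝ × ℝ,
      (a : ℂ) ^ 2 * pdt (pdt (fun q => Ψp q + starRingEnd ℂ (Ψp q))) p
        + (b : ℂ) ^ 2 * pdx (pdx (pdx (pdx (fun q => Ψp q + starRingEnd ℂ (Ψp q))))) p = 0) := by
  have ha' : (a : ℂ) ≠ 0 := by exact_mod_cast ha.ne'
  set Ψc : ℝ × ℝ → ℂ := fun q => starRingEnd ℂ (Ψp q) with hΨc_def
  have hΨc : ContDiff ℝ (⊤ : ℕ∞) Ψc := contDiff_conj Ψp hΨp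
  have hdp : Differentiable ℝ Ψp := hΨp.differentiable (by simp)
  have hdc : Differentiable ℝ Ψc := hΨc.differentiable (by simp)
  refine ⟨?_, ?_, ?_⟩
  · intro p
    simp only [Complex.ext_iff, add_re, conj_re, add_im, conj_im, ofReal_re, ofReal_im]
    constructor <;> ring
  · intro p
    simp
  · intro p
    -- relation for Ψp
    have h1 : ∀ q, pdt Ψp q = (Complex.I * b / a) * pdx (pdx Ψp) q := by
      intro q
      have h := hSp q
      field_simp
      linear_combination (-Complex.I) * h + ((a:ℂ) * pdt Ψp q) * Complex.I_sq
    -- relation for Ψc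
    have hxc : pdx Ψc = fun q => starRingEnd ℂ (pdx Ψp q) :=
      funext fun q => pdx_conj Ψp hdp q
    have hxxc : ∀ q, pdx (pdx Ψc) q = starRingEnd ℂ (pdx (pdx Ψp) q) := by
      intro q
      rw [hxc]
      exact pdx_conj (pdx Ψp) ((contDiff_pdx Ψp hΨp).differentiable (by simp)) q
    have h2 : ∀ q, pdt Ψc q = (-(Complex.I * b) / a) * pdx (pdx Ψc) q := by
      intro q
      have h := congrArg (starRingEnd ℂ) (hSp q)
      simp only [map_add, map_mul, Complex.conj_I, Complex.conj_ofReal, map_zero] at h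
      rw [← pdt_conj Ψp hdp q, ← hxxc q] at h
      field_simp
      linear_combination Complex.I * h + ((a:ℂ) * pdt Ψc q) * Complex.I_sq
    have k1 := key_lemma (Complex.I * b / a) Ψp hΨp h1 p
    have k2 := key_lemma (-(Complex.I * b) / a) Ψc hΨc h2 p
    -- additivity
    have hu : (fun q => Ψp q + starRingEnd ℂ (Ψp q)) = fun q => Ψp q + Ψc q := rfl
    rw [hu]
    have htu : pdt (fun q => Ψp q + Ψc q) = fun q => pdt Ψp q + pdt Ψc q :=
      funext fun q => pdt_add Ψp Ψc hdp hdc q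
    have httu : pdt (pdt (fun q => Ψp q + Ψc q)) p = pdt (pdt Ψp) p + pdt (pdt Ψc) p := by
      rw [htu]
      exact pdt_add _ _ ((contDiff_pdt Ψp hΨp).differentiable (by simp))
        ((contDiff_pdt Ψc hΨc).differentiable (by simp)) p
    have hx1 : pdx (fun q => Ψp q + Ψc q) = fun q => pdx Ψp q + pdx Ψc q :=
      funext fun q => pdx_add Ψp Ψc hdp hdc q
    have hx2 : pdx (pdx (fun q => Ψp q + Ψc q)) = fun q => pdx (pdx Ψp) q + pdx (pdx Ψc) q := by
      rw [hx1]
      exact funext fun q => pdx_add _ _ ((contDiff_pdx Ψp hΨp).differentiable (by simp))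
        ((contDiff_pdx Ψc hΨc).differentiable (by simp)) q
    have hx3 : pdx (pdx (pdx (fun q => Ψp q + Ψc q))) =
        fun q => pdx (pdx (pdx Ψp)) q + pdx (pdx (pdx Ψc)) q := by
      rw [hx2]
      exact funext fun q => pdx_add _ _
        ((contDiff_pdx _ (contDiff_pdx Ψp hΨp)).differentiable (by simp))
        ((contDiff_pdx _ (contDiff_pdx Ψc hΨc)).differentiable (by simp)) q
    have hx4 : pdx (pdx (pdx (pdx (fun q => Ψp q + Ψc q)))) p =
        pdx (pdx (pdx (pdx Ψp))) p + pdx (pdx (pdx (pdx Ψc))) p := by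
      rw [hx3]
      exact pdx_add _ _
        ((contDiff_pdx _ (contDiff_pdx _ (contDiff_pdx Ψp hΨp))).differentiable (by simp))
        ((contDiff_pdx _ (contDiff_pdx _ (contDiff_pdx Ψc hΨc))).differentiable (by simp)) p
    rw [httu, hx4, k1, k2]
    have hc2 : (a : ℂ) ^ 2 * (Complex.I * b / a) ^ 2 = -(b : ℂ) ^ 2 := by
      field_simp
      linear_combination (b:ℂ)^2 * Complex.I_sq
    have hc2' : (a : ℂ) ^ 2 * (-(Complex.I * b) / a) ^ 2 = -(b : ℂ) ^ 2 := by
      field_simp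
      linear_combination (b:ℂ)^2 * Complex.I_sq
    linear_combination (pdx (pdx (pdx (pdx Ψp))) p) * hc2 + (pdx (pdx (pdx (pdx Ψc))) p) * hc2'
end

section
/- Let u : ℝ × ℝ → ℝ be a smooth solution of the beam equation and ψ = b·∂ₓₓu − i·a·∂ₜu the associated wave function. Then the mechanical energy flux Q = b²·(∂ₜu·∂ₓₓₓu − ∂ₜₓu·∂ₓₓu) and the quantum flux q = (2b/a)·Im(ψ*·∂ₓψ) satisfy q = 2·Q. -/
open Complex

lemma lineX_hasDerivAt (c y : ℝ) :
    HasDerivAt (fun y : ℝ => ((c, y) : ℝ × ℝ)) ((0 : ℝ), (1 : ℝ)) y :=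
  (hasDerivAt_const y c).prodMk (hasDerivAt_id y)

lemma lineT_hasDerivAt (c s : ℝ) :
    HasDerivAt (fun s : ℝ => ((s, c) : ℝ × ℝ)) ((1 : ℝ), (0 : ℝ)) s :=
  (hasDerivAt_id s).prodMk (hasDerivAt_const s c)

lemma pdxR_hasDerivAt (u : ℝ × ℝ → ℝ) (hu : ContDiff ℝ (⊤ : ℕ∞) u) (p : ℝ × ℝ) :
    HasDerivAt (fun y => u (p.1, y)) (pdxR u p) p.2 := by
  have h := ((hu.differentiable (by simp) (p.1, p.2)).hasFDerivAt).comp_hasDerivAt p.2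
    (lineX_hasDerivAt p.1 p.2)
  have : pdxR u p = fderiv ℝ u (p.1, p.2) (0, 1) := h.deriv
  rw [this]; exact h

lemma pdtR_hasDerivAt (u : ℝ × ℝ → ℝ) (hu : ContDiff ℝ (⊤ : ℕ∞) u) (p : ℝ × ℝ) :
    HasDerivAt (fun s => u (s, p.2)) (pdtR u p) p.1 := by
  have h := ((hu.differentiable (by simp) (p.1, p.2)).hasFDerivAt).comp_hasDerivAt p.1
    (lineT_hasDerivAt p.2 p.1)
  have : pdtR u p = fderiv ℝ u (p.1, p.2) (1, 0) := h.deriv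
  rw [this]; exact h

lemma pdxR_eq_fderiv (u : ℝ × ℝ → ℝ) (hu : ContDiff ℝ (⊤ : ℕ∞) u) :
    pdxR u = fun p => fderiv ℝ u p (0, 1) := by
  funext p
  have h := ((hu.differentiable (by simp) (p.1, p.2)).hasFDerivAt).comp_hasDerivAt p.2
    (lineX_hasDerivAt p.1 p.2)
  exact h.deriv

lemma pdtR_eq_fderiv (u : ℝ × ℝ → ℝ) (hu : ContDiff ℝ (⊤ : ℕ∞) u) :
    pdtR u = fun p => fderiv ℝ u p (1, 0) := by
  funext p
  have h := ((hu.differentiable (by simp) (p.1, p.2)).hasFDerivAt).comp_hasDerivAt p.1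
    (lineT_hasDerivAt p.2 p.1)
  exact h.deriv

lemma contDiff_pdxR (u : ℝ × ℝ → ℝ) (hu : ContDiff ℝ (⊤ : ℕ∞) u) :
    ContDiff ℝ (⊤ : ℕ∞) (pdxR u) := by
  rw [pdxR_eq_fderiv u hu]
  exact (hu.fderiv_right (by simp)).clm_apply contDiff_const

lemma contDiff_pdtR (u : ℝ × ℝ → ℝ) (hu : ContDiff ℝ (⊤ : ℕ∞) u) :
    ContDiff ℝ (⊤ : ℕ∞) (pdtR u) := by
  rw [pdtR_eq_fderiv u hu]
  exact (hu.fderiv_right (by simp)).clm_apply contDiff_const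

theorem quantum_flux_eq_twice_mechanical_flux (a b : ℝ) (ha : 0 < a) (hb : 0 < b)
    (u : ℝ × ℝ → ℝ) (hu : ContDiff ℝ (⊤ : ℕ∞) u)
    (hbeam : ∀ p : ℝ × ℝ,
      a ^ 2 * pdtR (pdtR u) p + b ^ 2 * pdxR (pdxR (pdxR (pdxR u))) p = 0) :
    ∀ p : ℝ × ℝ,
      2 * b / a
          * (starRingEnd ℂ
                ((fun q => (b * pdxR (pdxR u) q : ℝ) - Complex.I * (a : ℂ) * (pdtR u q : ℝ)) p)
              * pdx (fun q => (b * pdxR (pdxR u) q : ℝ) - Complex.I * (a : ℂ) * (pdtR u q : ℝ)) p).im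
        = 2 * (b ^ 2 *
            (pdtR u p * pdxR (pdxR (pdxR u)) p - pdxR (pdtR u) p * pdxR (pdxR u) p)) := by
  intro p
  have hX2 : ContDiff ℝ (⊤ : ℕ∞) (pdxR (pdxR u)) := contDiff_pdxR _ (contDiff_pdxR u hu)
  have hT : ContDiff ℝ (⊤ : ℕ∞) (pdtR u) := contDiff_pdtR u hu
  -- derivative of x ↦ uxx(p.1, x) is uxxx
  have hgx : HasDerivAt (fun y => pdxR (pdxR u) (p.1, y)) (pdxR (pdxR (pdxR u)) p) p.2 :=
    pdxR_hasDerivAt _ hX2 p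
  have htx : HasDerivAt (fun y => pdtR u (p.1, y)) (pdxR (pdtR u) p) p.2 :=
    pdxR_hasDerivAt _ hT p
  have hc : HasDerivAt
      (fun y => ((b * pdxR (pdxR u) (p.1, y) : ℝ) : ℂ)
        - Complex.I * (a : ℂ) * ((pdtR u (p.1, y) : ℝ) : ℂ))
      (((b * pdxR (pdxR (pdxR u)) p : ℝ) : ℂ)
        - Complex.I * (a : ℂ) * ((pdxR (pdtR u) p : ℝ) : ℂ)) p.2 :=
    ((hgx.const_mul b).ofReal_comp).sub ((htx.ofReal_comp).const_mul (Complex.I * (a : ℂ)))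
  have hpdx : pdx (fun q => ((b * pdxR (pdxR u) q : ℝ) : ℂ)
        - Complex.I * (a : ℂ) * ((pdtR u q : ℝ) : ℂ)) p
      = ((b * pdxR (pdxR (pdxR u)) p : ℝ) : ℂ)
        - Complex.I * (a : ℂ) * ((pdxR (pdtR u) p : ℝ) : ℂ) := hc.deriv
  rw [hpdx]
  simp only [map_sub, map_mul, Complex.conj_ofReal, Complex.conj_I, Complex.ofReal_mul]
  simp [Complex.mul_im, Complex.mul_re, Complex.sub_im, Complex.sub_re,
    Complex.add_im, Complex.add_re, Complex.I_re, Complex.I_im]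
  field_simp
  ring
end
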